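/- For all vectors x = (x₁,x₂,x₃) and y = (y₁,y₂,y₃) in ℝ³, exp(−‖x−y‖²/2) = Σ_{(l,m,n)∈ℕ³} (y₁^l·y₂^m·y₃^n)/(l!·m!·n!) · h_l(x₁)·h_m(x₂)·h_n(x₃), where the family indexed by ℕ³ is (absolutely) summable and ‖·‖ is the Euclidean norm on ℝ³. -/

import Mathlib

/-- Probabilists' Hermite polynomials evaluated over ℝ. -/
noncomputable def He (n : ℕ) (x : ℝ) : ℝ := Polynomial.aeval x (Polynomial.hermite n)

/-- Hermite functions `h n x = exp (-x^2/2) * He n x`. -/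
noncomputable def hermiteFun (n : ℕ) (x : ℝ) : ℝ := Real.exp (-x ^ 2 / 2) * He n x

/-!
The generating function `∑ₙ tⁿ/n! Heₙ(x) = exp (x t - t²/2)` is the Cauchy product of
`exp (x t) = ∑ₘ (x t)ᵐ/m!` and `exp (-t²/2) = ∑ₖ (-t²/2)ᵏ/k!`: by the explicit formula for
the coefficients of `Heₙ`, the term with index `(m, k)` is the `xᵐ`-monomial of `tⁿ/n! Heₙ(x)`
for `n = 2k + m`, and these are all its nonzero monomials. Multiplying by `exp (-x²/2)` gives
`exp (-(x - y)²/2) = ∑ₙ yⁿ/n! hₙ(x)`, and the three-dimensional kernel is the product of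
three such absolutely convergent one-dimensional expansions.
-/

open Polynomial
open scoped Nat

theorem Nat.doubleFactorial_two_mul_sub_one_mul (k : ℕ) :
    (2 * k - 1)‼ * (2 ^ k * k !) = (2 * k)! := by
  cases k with
  | zero => rfl
  | succ k =>
    rw [← Nat.doubleFactorial_two_mul, show 2 * (k + 1) = 2 * k + 1 + 1 by ring,
      Nat.factorial_eq_mul_doubleFactorial, Nat.add_sub_cancel, mul_comm]

theorem Polynomial.coeff_hermite_two_mul_add_mul_factorial (k m : ℕ) :
    coeff (hermite (2 * k + m)) m * (2 ^ k * k ! * m !) = (-1) ^ k * (2 * k + m)! := by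
  rw [coeff_hermite_explicit, ← Nat.add_choose_mul_factorial_mul_factorial,
    ← Nat.doubleFactorial_two_mul_sub_one_mul]
  push_cast
  ring

theorem Polynomial.exists_eq_two_mul_add_of_coeff_hermite_ne_zero {n m : ℕ}
    (h : coeff (hermite n) m ≠ 0) : ∃ k, n = 2 * k + m := by
  have hle : m ≤ n := not_lt.1 fun hlt => h (coeff_hermite_of_lt hlt)
  obtain ⟨k, hk⟩ : Even (n + m) :=
    Nat.not_odd_iff_even.1 fun hodd => h (coeff_hermite_of_odd_add hodd)
  exact ⟨k - m, by omega⟩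

theorem Polynomial.hasSum_intCast_coeff_mul_pow {A : Type*} [Ring A] [TopologicalSpace A]
    (p : ℤ[X]) (x : A) : HasSum (fun m => (p.coeff m : A) * x ^ m) (aeval x p) := by
  rw [aeval_eq_sum_range]
  simp only [zsmul_eq_mul]
  exact hasSum_sum_of_ne_finset_zero fun m hm => by
    rw [coeff_eq_zero_of_natDegree_lt (by simpa using hm), Int.cast_zero, zero_mul]

theorem HasSum.mul_of_finiteDimensional {ι ι' R : Type*} [NormedRing R] [NormedAlgebra ℝ R]
    [FiniteDimensional ℝ R] {f : ι → R} {g : ι' → R} {a b : R}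
    (hf : HasSum f a) (hg : HasSum g b) :
    HasSum (fun p : ι × ι' => f p.1 * g p.2) (a * b) :=
  haveI := FiniteDimensional.complete ℝ R
  hf.mul hg <| summable_mul_of_summable_norm (summable_norm_iff.2 hf.summable)
    (summable_norm_iff.2 hg.summable)

theorem Real.hasSum_pow_div_factorial (x : ℝ) : HasSum (fun n => x ^ n / n !) (Real.exp x) := by
  rw [Real.exp_eq_exp_ℝ]
  exact NormedSpace.expSeries_div_hasSum_exp x

theorem hasSum_pow_div_factorial_mul_He (x t : ℝ) :
    HasSum (fun n => t ^ n / n ! * He n x) (Real.exp (x * t - t ^ 2 / 2)) := by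
  set F : ℕ × ℕ → ℝ := fun q =>
    t ^ q.1 / q.1 ! * (((hermite q.1).coeff q.2 : ℝ) * x ^ q.2)
  set e : ℕ × ℕ → ℕ × ℕ := fun p => (2 * p.2 + p.1, p.1)
  have he : Function.Injective e := fun p q h => by
    simp only [e, Prod.mk.injEq] at h
    exact Prod.ext h.2 (by omega)
  have hsupp : ∀ q ∉ Set.range e, F q = 0 := by
    rintro ⟨n, m⟩ hq
    suffices coeff (hermite n) m = 0 by simp [F, this]
    by_contra hc
    obtain ⟨k, rfl⟩ := exists_eq_two_mul_add_of_coeff_hermite_ne_zero hc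
    exact hq ⟨(m, k), rfl⟩
  have hterm : F ∘ e = fun p => (x * t) ^ p.1 / p.1 ! * ((-(t ^ 2 / 2)) ^ p.2 / p.2 !) := by
    ext ⟨m, k⟩
    have hc := congrArg (Int.cast : ℤ → ℝ) (coeff_hermite_two_mul_add_mul_factorial k m)
    push_cast at hc
    rw [← eq_div_iff (by positivity)] at hc
    simp only [Function.comp_apply, F, e, hc]
    rw [neg_pow (t ^ 2 / 2), div_pow]
    field_simp
    ring
  have hF : HasSum F (Real.exp (x * t) * Real.exp (-(t ^ 2 / 2))) := by
    rw [← he.hasSum_iff hsupp, hterm]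
    exact (Real.hasSum_pow_div_factorial _).mul_of_finiteDimensional
      (Real.hasSum_pow_div_factorial _)
  rw [sub_eq_add_neg, Real.exp_add]
  exact hF.prod_fiberwise fun n => ((hermite n).hasSum_intCast_coeff_mul_pow x).mul_left _

theorem hasSum_pow_div_factorial_mul_hermiteFun (x y : ℝ) :
    HasSum (fun n => y ^ n / n ! * hermiteFun n x) (Real.exp (-(x - y) ^ 2 / 2)) := by
  have hval : Real.exp (-(x - y) ^ 2 / 2) =
      Real.exp (-x ^ 2 / 2) * Real.exp (x * y - y ^ 2 / 2) := by
    rw [← Real.exp_add]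
    ring_nf
  rw [hval]
  exact ((hasSum_pow_div_factorial_mul_He x y).mul_left _).congr_fun fun n => by
    unfold hermiteFun
    ring

/-- Three-dimensional expansion of the Gaussian RBF kernel in Hermite functions:
for `x, y ∈ ℝ³` (with the Euclidean norm),
`exp (-‖x-y‖²/2) = ∑_{(l,m,n)} (y₁^l y₂^m y₃^n)/(l! m! n!) * h l x₁ * h m x₂ * h n x₃`,
the family over `ℕ³` being absolutely summable. -/
theorem gaussian_kernel_hermite_expansion_3d (x y : EuclideanSpace ℝ (Fin 3)) :
    Summable (fun p : ℕ × ℕ × ℕ =>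
      |y 0 ^ p.1 * y 1 ^ p.2.1 * y 2 ^ p.2.2 /
          ((p.1.factorial : ℝ) * (p.2.1.factorial : ℝ) * (p.2.2.factorial : ℝ)) *
        (hermiteFun p.1 (x 0) * hermiteFun p.2.1 (x 1) * hermiteFun p.2.2 (x 2))|) ∧
    HasSum (fun p : ℕ × ℕ × ℕ =>
        y 0 ^ p.1 * y 1 ^ p.2.1 * y 2 ^ p.2.2 /
            ((p.1.factorial : ℝ) * (p.2.1.factorial : ℝ) * (p.2.2.factorial : ℝ)) *
          (hermiteFun p.1 (x 0) * hermiteFun p.2.1 (x 1) * hermiteFun p.2.2 (x 2)))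
      (Real.exp (-‖x - y‖ ^ 2 / 2)) := by
  have h := (hasSum_pow_div_factorial_mul_hermiteFun (x 0) (y 0)).mul_of_finiteDimensional
    ((hasSum_pow_div_factorial_mul_hermiteFun (x 1) (y 1)).mul_of_finiteDimensional
      (hasSum_pow_div_factorial_mul_hermiteFun (x 2) (y 2)))
  have hval : Real.exp (-(x 0 - y 0) ^ 2 / 2) *
      (Real.exp (-(x 1 - y 1) ^ 2 / 2) * Real.exp (-(x 2 - y 2) ^ 2 / 2)) =
      Real.exp (-‖x - y‖ ^ 2 / 2) := by
    rw [EuclideanSpace.norm_sq_eq, Fin.sum_univ_three, ← Real.exp_add, ← Real.exp_add]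
    simp only [PiLp.sub_apply, Real.norm_eq_abs, sq_abs]
    ring_nf
  rw [hval] at h
  have hterm : ∀ p : ℕ × ℕ × ℕ,
      y 0 ^ p.1 * y 1 ^ p.2.1 * y 2 ^ p.2.2 /
          ((p.1.factorial : ℝ) * (p.2.1.factorial : ℝ) * (p.2.2.factorial : ℝ)) *
        (hermiteFun p.1 (x 0) * hermiteFun p.2.1 (x 1) * hermiteFun p.2.2 (x 2)) =
      y 0 ^ p.1 / p.1 ! * hermiteFun p.1 (x 0) *
        (y 1 ^ p.2.1 / p.2.1 ! * hermiteFun p.2.1 (x 1) *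
          (y 2 ^ p.2.2 / p.2.2 ! * hermiteFun p.2.2 (x 2))) := fun p => by ring
  exact ⟨summable_abs_iff.2 (h.summable.congr fun p => (hterm p).symm), h.congr_fun hterm⟩
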